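/- Theorem 1 (FD decoupling, existential form): Let K, M, T, R be positive integers, D = KM, and let g ∈ ℂ^D be a GFDM prototype filter whose frequency-domain version g_f = √D · W_D · g satisfies g_f = Π_D^l · [g_1^T, 0^T_{(K−1)M}]^T for some g_1 ∈ ℂ^M and integer 0 ≤ l < D. Let A be the GFDM transmitter matrix of g, let H_{r,t} ∈ ℂ^{D×D} be circulant matrices, and let H̃ ∈ ℂ^{RD×TD} be the block matrix with (r,t) block H_{r,t}·A. Then there exist matrices F_k ∈ ℂ^{MR×MT}, k = 0, …, K−1, such that H̃ = U^H · blkdiag({F_k}_{k=0}^{K−1}) · P, where U = (Π_{KR} ⊗ I_M)(I_R ⊗ Π_D^{−l} W_D) and P = (Π_{KT} ⊗ I_M)(I_T ⊗ Π_{KM}). -/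

import Mathlib

open Matrix Complex

noncomputable section

/-- The normalized `p`-point DFT matrix `W_p`,
with `[W_p]_{m,n} = exp(-2πi m n / p) / √p`. -/
def dftMat (p : ℕ) : Matrix (Fin p) (Fin p) ℂ :=
  Matrix.of fun m n =>
    Complex.exp (-2 * (Real.pi : ℂ) * Complex.I * (m.val : ℂ) * (n.val : ℂ) / (p : ℂ)) /
      ((Real.sqrt p : ℝ) : ℂ)

/-- `Π_A^s`, the `s`-th (integer) power of the `A×A` cyclic-shift permutation matrix
`Π_A` (whose `(m,n)` entry is `1` iff `m ≡ n+1 (mod A)`).  In general the `(m,n)` entry of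
`Π_A^s` is `1` iff `m ≡ n + s (mod A)`; in particular `Π_A = cycPow A 1` and
`Π_A^{-s} = cycPow A (-s)`. -/
def cycPow (A : ℕ) (s : ℤ) : Matrix (Fin A) (Fin A) ℂ :=
  Matrix.of fun m n => if (m.val : ZMod A) = (n.val : ZMod A) + (s : ZMod A) then 1 else 0

/-- The `AB×AB` permutation matrix `Π_{AB}` with
`[Π_{AB}]_{mB+p, qA+n} = δ_{mn} δ_{pq}` for `0 ≤ m,n < A`, `0 ≤ p,q < B`. -/
def piAB (A B : ℕ) : Matrix (Fin (A * B)) (Fin (A * B)) ℂ :=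
  Matrix.of fun i j => if i.val / B = j.val % A ∧ i.val % B = j.val / A then 1 else 0

/-- Kronecker product, with flat (`Fin (a*c)`) indexing:
`(X ⊗ Y)_{i c + p, j d + q} = X_{i,j} Y_{p,q}`. -/
def kron {a b c d : ℕ} (X : Matrix (Fin a) (Fin b) ℂ) (Y : Matrix (Fin c) (Fin d) ℂ) :
    Matrix (Fin (a * c)) (Fin (b * d)) ℂ :=
  Matrix.of fun i j => X i.divNat j.divNat * Y i.modNat j.modNat

/-- The `R×T` block matrix with blocks `E r t` of size `a×b`, flatly indexed:
block `(r,t)` occupies rows `r*a,…,r*a+a-1` and columns `t*b,…,t*b+b-1`. -/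
def blockFlat {R T a b : ℕ} (E : Fin R → Fin T → Matrix (Fin a) (Fin b) ℂ) :
    Matrix (Fin (R * a)) (Fin (T * b)) ℂ :=
  Matrix.of fun i j => E i.divNat j.divNat i.modNat j.modNat

/-- The block-diagonal matrix `blkdiag({F_k}_{k=0}^{K-1})` whose `k`-th diagonal
block is the `a×b` matrix `F k`. -/
def blkdiag {K a b : ℕ} (F : Fin K → Matrix (Fin a) (Fin b) ℂ) :
    Matrix (Fin (K * a)) (Fin (K * b)) ℂ :=
  Matrix.of fun i j => if i.divNat = j.divNat then F i.divNat i.modNat j.modNat else 0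

/-- Index-value-preserving cast between matrix dimensions. -/
def castM {a b c d : ℕ} (h1 : a = c) (h2 : b = d) (X : Matrix (Fin a) (Fin b) ℂ) :
    Matrix (Fin c) (Fin d) ℂ :=
  Matrix.reindex (finCongr h1) (finCongr h2) X

/-- The length-`D` vector `[g₁ᵀ, 0ᵀ]ᵀ` obtained by padding `g₁ ∈ ℂ^M` with zeros. -/
def pad (D M : ℕ) (g1 : Fin M → ℂ) : Fin D → ℂ :=
  fun i => if h : i.val < M then g1 ⟨i.val, h⟩ else 0

/-- The `k`-th length-`a` segment of a vector `v ∈ ℂ^{K a}`: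
`(seg v k) i = v (k*a + i)`. -/
def seg {K a : ℕ} (v : Fin (K * a) → ℂ) (k : Fin K) : Fin a → ℂ :=
  fun i => v ⟨k.val * a + i.val, by
    have hk := k.isLt
    have hi := i.isLt
    calc k.val * a + i.val < k.val * a + a := by omega
      _ = (k.val + 1) * a := by ring
      _ ≤ K * a := Nat.mul_le_mul_right a hk⟩

/-- The GFDM transmitter matrix of the prototype filter `g ∈ ℂ^{KM}`:
`[A]_{n, mK+k} = [g]_{(n-mK) mod D} · exp(2πi k n / K)` with `D = K M`. -/
def gfdm (K M : ℕ) (hK : 0 < K) (hM : 0 < M) (g : Fin (K * M) → ℂ) :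
    Matrix (Fin (K * M)) (Fin (K * M)) ℂ :=
  Matrix.of fun n j =>
    g ⟨(n.val + K * M - (j.val / K) * K) % (K * M), Nat.mod_lt _ (Nat.mul_pos hK hM)⟩ *
      Complex.exp (2 * (Real.pi : ℂ) * Complex.I * ((j.val % K : ℕ) : ℂ) * (n.val : ℂ) / (K : ℂ))

/-!
A circulant channel is diagonalised by the DFT, and column `mK + k` of the GFDM matrix is `g`
cyclically shifted by `mK` and modulated by frequency `Mk`, so its DFT is `ĝ` shifted by `Mk`.
By hypothesis `ĝ` lives on the window of length `M` starting at `l`; hence, once the shift by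
`l` is undone, column `mK + k` of `W H A` only has the frequency rows `Mk, …, Mk + M - 1`, and
`Π^{-l} W H_{r,t} A Π_{KM}ᴴ` is block diagonal with `K` blocks of size `M`. Conjugating the block
matrix by `Π_{KR} ⊗ I_M` and `Π_{KT} ⊗ I_M` gathers the `k`-th blocks of all `(r, t)` into one
block, so `U H̃ Pᴴ` is block diagonal, and `H̃ = Uᴴ (U H̃ Pᴴ) P` because `U` and `P` are unitary.
-/

section UnitaryMatrices

open Kronecker

lemma eq_conjTranspose_mul_mul_of_mem_unitaryGroup {m n : Type*} [Fintype m] [DecidableEq m]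
    [Fintype n] [DecidableEq n] {U : Matrix m m ℂ} {P : Matrix n n ℂ}
    (hU : U ∈ unitaryGroup m ℂ) (hP : P ∈ unitaryGroup n ℂ) (X : Matrix m n ℂ) :
    X = Uᴴ * (U * X * Pᴴ) * P := by
  rw [mem_unitaryGroup_iff', star_eq_conjTranspose] at hU hP
  simp only [← Matrix.mul_assoc, hU, Matrix.one_mul]
  rw [Matrix.mul_assoc, hP, Matrix.mul_one]

lemma permMatrix_mem_unitaryGroup {ι : Type*} [Fintype ι] [DecidableEq ι] (σ : Equiv.Perm ι) :
    σ.permMatrix ℂ ∈ unitaryGroup ι ℂ := by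
  rw [mem_unitaryGroup_iff', star_eq_conjTranspose, conjTranspose_permMatrix,
    PEquiv.toMatrix_toPEquiv_mul]
  ext i j
  simp [one_apply]

lemma reindex_mem_unitaryGroup {m n : Type*} [Fintype m] [DecidableEq m] [Fintype n]
    [DecidableEq n] (e : m ≃ n) {A : Matrix m m ℂ} (hA : A ∈ unitaryGroup m ℂ) :
    reindex e e A ∈ unitaryGroup n ℂ := by
  rw [mem_unitaryGroup_iff'] at hA ⊢
  rw [star_eq_conjTranspose, conjTranspose_reindex, reindex_apply, reindex_apply,
    submatrix_mul_equiv, ← star_eq_conjTranspose, hA, submatrix_one_equiv]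

lemma kron_eq_reindex_kronecker {a b c d : ℕ} (X : Matrix (Fin a) (Fin b) ℂ)
    (Y : Matrix (Fin c) (Fin d) ℂ) :
    kron X Y = reindex finProdFinEquiv finProdFinEquiv (X ⊗ₖ Y) := by
  ext i j
  simp [kron]

lemma kron_mem_unitaryGroup {a c : ℕ} {X : Matrix (Fin a) (Fin a) ℂ}
    {Y : Matrix (Fin c) (Fin c) ℂ} (hX : X ∈ unitaryGroup (Fin a) ℂ)
    (hY : Y ∈ unitaryGroup (Fin c) ℂ) : kron X Y ∈ unitaryGroup (Fin (a * c)) ℂ := by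
  rw [kron_eq_reindex_kronecker]
  exact reindex_mem_unitaryGroup _ (kronecker_mem_unitary hX hY)

lemma conjTranspose_kron {a b c d : ℕ} (X : Matrix (Fin a) (Fin b) ℂ)
    (Y : Matrix (Fin c) (Fin d) ℂ) : (kron X Y)ᴴ = kron Xᴴ Yᴴ := by
  ext i j
  simp [kron, star_mul']

lemma kron_permMatrix_one {a c : ℕ} (σ : Equiv.Perm (Fin a)) :
    kron (σ.permMatrix ℂ) (1 : Matrix (Fin c) (Fin c) ℂ)
      = (finProdFinEquiv.permCongr (σ.prodCongr (Equiv.refl (Fin c)))).permMatrix ℂ := by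
  ext i j
  simp only [kron, of_apply, PEquiv.toMatrix_toPEquiv_apply, Pi.single_apply, one_apply,
    Equiv.permCongr_apply, ← Equiv.symm_apply_eq, finProdFinEquiv_symm_apply,
    Equiv.prodCongr_apply, Prod.map_apply, Equiv.refl_apply, Prod.ext_iff, ite_zero_mul_ite_zero,
    mul_one, eq_comm (a := i.modNat)]

lemma castM_permMatrix {a c : ℕ} (h : a = c) (σ : Equiv.Perm (Fin a)) :
    castM h h (σ.permMatrix ℂ) = ((finCongr h).permCongr σ).permMatrix ℂ := by
  subst h
  ext i j
  simp [castM]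

def piABPerm (A B : ℕ) : Equiv.Perm (Fin (A * B)) :=
  finProdFinEquiv.symm.trans
    ((Equiv.prodComm _ _).trans (finProdFinEquiv.trans (finCongr (Nat.mul_comm B A))))

lemma piABPerm_val {A B : ℕ} (i : Fin (A * B)) :
    (piABPerm A B i).val = i.val / B + A * (i.val % B) := by
  simp [piABPerm]

lemma piAB_eq_permMatrix (A B : ℕ) : piAB A B = (piABPerm A B).permMatrix ℂ := by
  ext i j
  have hiB : i.val / B < A := Nat.div_lt_of_lt_mul (Nat.mul_comm A B ▸ i.isLt)
  simp only [piAB, of_apply, PEquiv.toMatrix_toPEquiv_apply, Pi.single_apply, Fin.ext_iff,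
    piABPerm_val]
  congr 1
  apply propext
  constructor
  · rintro ⟨h₁, h₂⟩
    rw [h₁, h₂, Nat.mod_add_div]
  · intro h
    rw [h, Nat.add_mul_mod_self_left, Nat.mod_eq_of_lt hiB,
      Nat.add_mul_div_left _ _ (Nat.zero_lt_of_lt hiB), Nat.div_eq_of_lt hiB, zero_add]
    exact ⟨rfl, rfl⟩

lemma piAB_mem_unitaryGroup (A B : ℕ) : piAB A B ∈ unitaryGroup (Fin (A * B)) ℂ := by
  rw [piAB_eq_permMatrix]
  exact permMatrix_mem_unitaryGroup _

end UnitaryMatrices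

section Blocks

@[simp]
lemma divNat_finProdFinEquiv {m n : ℕ} (x : Fin m) (y : Fin n) :
    (finProdFinEquiv (x, y)).divNat = x :=
  congrArg Prod.fst (finProdFinEquiv.symm_apply_apply (x, y))

@[simp]
lemma modNat_finProdFinEquiv {m n : ℕ} (x : Fin m) (y : Fin n) :
    (finProdFinEquiv (x, y)).modNat = y :=
  congrArg Prod.snd (finProdFinEquiv.symm_apply_apply (x, y))

lemma blockFlat_mul_blockFlat {R S T a b c : ℕ} (E : Fin R → Fin S → Matrix (Fin a) (Fin b) ℂ)
    (F : Fin S → Fin T → Matrix (Fin b) (Fin c) ℂ) :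
    blockFlat E * blockFlat F = blockFlat fun r t => ∑ s, E r s * F s t := by
  ext i j
  rw [mul_apply, ← Equiv.sum_comp finProdFinEquiv, Fintype.sum_prod_type]
  simp [blockFlat, Matrix.sum_apply, mul_apply]

lemma kron_one_eq_blockFlat {R a b : ℕ} (G : Matrix (Fin a) (Fin b) ℂ) :
    kron (1 : Matrix (Fin R) (Fin R) ℂ) G = blockFlat fun r t => if r = t then G else 0 := by
  ext i j
  simp only [kron, blockFlat, of_apply, one_apply]
  split_ifs <;> simp

lemma kron_one_mul_blockFlat {R T a b c : ℕ} (G : Matrix (Fin a) (Fin b) ℂ)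
    (E : Fin R → Fin T → Matrix (Fin b) (Fin c) ℂ) :
    kron (1 : Matrix (Fin R) (Fin R) ℂ) G * blockFlat E = blockFlat fun r t => G * E r t := by
  rw [kron_one_eq_blockFlat, blockFlat_mul_blockFlat]
  congr with r t : 2
  rw [Fintype.sum_eq_single r fun s hs => by simp [Ne.symm hs]]
  simp

lemma blockFlat_mul_kron_one {R T a b c : ℕ} (E : Fin R → Fin T → Matrix (Fin a) (Fin b) ℂ)
    (G : Matrix (Fin b) (Fin c) ℂ) :
    blockFlat E * kron (1 : Matrix (Fin T) (Fin T) ℂ) G = blockFlat fun r t => E r t * G := by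
  rw [kron_one_eq_blockFlat, blockFlat_mul_blockFlat]
  congr with r t : 2
  rw [Fintype.sum_eq_single t fun s hs => by simp [hs]]
  simp

lemma exists_castM_blkdiag_eq {K a b c d : ℕ} (h₁ : K * a = c) (h₂ : K * b = d)
    (Y : Matrix (Fin c) (Fin d) ℂ)
    (hY : ∀ i j, (finCongr h₁.symm i).divNat ≠ (finCongr h₂.symm j).divNat → Y i j = 0) :
    ∃ F : Fin K → Matrix (Fin a) (Fin b) ℂ, Y = castM h₁ h₂ (blkdiag F) := by
  subst h₁ h₂
  refine ⟨fun k p q => Y (finProdFinEquiv (k, p)) (finProdFinEquiv (k, q)), ?_⟩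
  ext i j
  simp only [castM, finCongr_refl, reindex_apply, Equiv.refl_symm, submatrix_apply,
    Equiv.refl_apply, blkdiag, of_apply]
  split_ifs with hij
  · rw [show finProdFinEquiv (i.divNat, j.modNat) = j by
        rw [hij]; exact finProdFinEquiv.apply_symm_apply j]
    rw [show finProdFinEquiv (i.divNat, i.modNat) = i from finProdFinEquiv.apply_symm_apply i]
  · exact hY i j (by simpa using hij)

end Blocks

section CyclicIndices

/- Index arithmetic in `Fin D` is taken modulo `D`, through the scoped ring structure
`Fin.CommRing`. -/
open Fin.CommRing

variable {D : ℕ} [NeZero D]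

lemma ZMod.finEquiv_apply (x : Fin D) : ZMod.finEquiv D x = (x.val : ZMod D) := by
  obtain ⟨n, rfl⟩ := Nat.exists_eq_succ_of_ne_zero (NeZero.ne D)
  exact (Fin.cast_val_eq_self x).symm

variable (D) in
def finChar : AddChar (Fin D) ℂ :=
  ZMod.stdAddChar.compAddMonoidHom (ZMod.finEquiv D).toAddMonoidHom

lemma finChar_natCast (a : ℕ) : finChar D a = exp (2 * Real.pi * I * a / D) := by
  simpa [finChar] using ZMod.stdAddChar_coe (N := D) a

lemma sum_finChar_mul (b : Fin D) :
    ∑ x, finChar D (x * b) = if b = 0 then (D : ℂ) else 0 := by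
  have h := AddChar.sum_mulShift (ZMod.finEquiv D b) (ZMod.isPrimitive_stdAddChar D)
  rw [← (ZMod.finEquiv D).toEquiv.sum_comp] at h
  simpa [finChar, ZMod.card] using h

lemma dftMat_apply_finChar (f n : Fin D) :
    dftMat D f n = finChar D (-(f * n)) / (Real.sqrt D : ℂ) := by
  have : f * n = ((f.val * n.val : ℕ) : Fin D) := by simp
  rw [this, AddChar.map_neg_eq_inv, finChar_natCast, ← Complex.exp_neg, dftMat, of_apply]
  congr 2
  push_cast
  ring

lemma dftMat_conjTranspose_mul_self : (dftMat D)ᴴ * dftMat D = 1 := by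
  ext i j
  have hD : (D : ℂ) ≠ 0 := Nat.cast_ne_zero.mpr (NeZero.ne D)
  have hsqrt : (Real.sqrt D : ℂ) * (Real.sqrt D : ℂ) = D := by
    rw [← ofReal_mul, Real.mul_self_sqrt D.cast_nonneg, ofReal_natCast]
  have hterm : ∀ n, star (dftMat D n i) * dftMat D n j = finChar D (n * (i - j)) / D := by
    intro n
    rw [dftMat_apply_finChar, dftMat_apply_finChar, star_div₀, Complex.star_def,
      ← AddChar.map_neg_eq_conj, conj_ofReal, div_mul_div_comm, ← AddChar.map_add_eq_mul, hsqrt]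
    ring_nf
  simp only [mul_apply, conjTranspose_apply, hterm, ← Finset.sum_div, sum_finChar_mul,
    sub_eq_zero, one_apply]
  split_ifs <;> simp [hD]

lemma dftMat_mul_circulant (h : Fin D → ℂ) :
    dftMat D * circulant h = diagonal (fun f => ∑ b, finChar D (-(f * b)) * h b) * dftMat D := by
  ext f n
  rw [diagonal_mul, mul_apply, ← Equiv.sum_comp (Equiv.addRight n), Finset.sum_mul]
  refine Finset.sum_congr rfl fun b _ => ?_
  rw [Equiv.coe_addRight, circulant_apply, add_sub_cancel_right, dftMat_apply_finChar,
    dftMat_apply_finChar, mul_add, neg_add, AddChar.map_add_eq_mul]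
  ring

lemma dftMat_mulVec_modulate_shift (v : Fin D → ℂ) (c k f : Fin D) :
    (dftMat D *ᵥ fun n => v (n - c) * finChar D (k * n)) f
      = finChar D (-((f - k) * c)) * (dftMat D *ᵥ v) (f - k) := by
  simp only [mulVec, dotProduct, Finset.mul_sum]
  rw [← Equiv.sum_comp (Equiv.addRight c)]
  refine Finset.sum_congr rfl fun m _ => ?_
  have hphase : finChar D (-(f * (m + c))) * finChar D (k * (m + c))
      = finChar D (-((f - k) * c)) * finChar D (-((f - k) * m)) := by
    rw [← AddChar.map_add_eq_mul, ← AddChar.map_add_eq_mul]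
    ring_nf
  rw [Equiv.coe_addRight, add_sub_cancel_right, dftMat_apply_finChar, dftMat_apply_finChar]
  linear_combination v m / (Real.sqrt D : ℂ) * hphase

lemma cycPow_eq_permMatrix (s : ℤ) :
    cycPow D s = Equiv.Perm.permMatrix ℂ (Equiv.subRight (s : Fin D)) := by
  ext m n
  have key : (m.val : ZMod D) = n.val + s ↔ n = m - s := by
    rw [eq_sub_iff_add_eq, eq_comm, ← (ZMod.finEquiv D).injective.eq_iff, map_add, map_intCast,
      ZMod.finEquiv_apply, ZMod.finEquiv_apply]
  simp only [cycPow, of_apply, PEquiv.toMatrix_toPEquiv_apply, Pi.single_apply,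
    Equiv.subRight_apply, key]

variable (D) in
lemma cycPow_mul_dftMat_mem_unitaryGroup (s : ℤ) :
    cycPow D s * dftMat D ∈ unitaryGroup (Fin D) ℂ := by
  rw [cycPow_eq_permMatrix]
  refine mul_mem (permMatrix_mem_unitaryGroup _) ?_
  rw [mem_unitaryGroup_iff']
  exact dftMat_conjTranspose_mul_self

lemma dftMat_mulVec_eq_pad {M : ℕ} {g : Fin D → ℂ} {g1 : Fin M → ℂ} {l : ℕ}
    (hgf : ((Real.sqrt D : ℝ) : ℂ) • (dftMat D *ᵥ g) = cycPow D (l : ℤ) *ᵥ pad D M g1)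
    (x : Fin D) : (dftMat D *ᵥ g) x = pad D M g1 (x - l) / (Real.sqrt D : ℂ) := by
  have hD : (Real.sqrt D : ℂ) ≠ 0 := by
    exact_mod_cast (Real.sqrt_pos.mpr (Nat.cast_pos.mpr (NeZero.pos D))).ne'
  have hx := congrFun hgf x
  rw [cycPow_eq_permMatrix, permMatrix_mulVec, Pi.smul_apply, smul_eq_mul] at hx
  rw [eq_div_iff hD, mul_comm, hx]
  simp

end CyclicIndices

section GFDM

open Fin.CommRing

variable {K M : ℕ} [NeZero K] [NeZero M]

lemma gfdm_apply (g : Fin (K * M) → ℂ) (n v : Fin (K * M)) :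
    gfdm K M (NeZero.pos K) (NeZero.pos M) g n v
      = g (n - ((v.val / K * K : ℕ) : Fin (K * M)))
        * finChar (K * M) (((M * (v.val % K) : ℕ) : Fin (K * M)) * n) := by
  have hc : v.val / K * K < K * M := (Nat.div_mul_le_self _ _).trans_lt v.isLt
  have hidx : (⟨(n.val + K * M - v.val / K * K) % (K * M), Nat.mod_lt _ (NeZero.pos _)⟩ : Fin _)
      = n - ((v.val / K * K : ℕ) : Fin (K * M)) := by
    ext
    rw [Fin.val_sub, Fin.val_natCast, Nat.mod_eq_of_lt hc, Fin.val_mk]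
    congr 1
    omega
  have hphase : (((M * (v.val % K) : ℕ) : Fin (K * M)) * n)
      = ((M * (v.val % K) * n.val : ℕ) : Fin (K * M)) := by
    rw [Nat.cast_mul _ n.val, Fin.cast_val_eq_self]
  rw [gfdm, of_apply, hidx, hphase, finChar_natCast]
  congr 2
  have hK : (K : ℂ) ≠ 0 := Nat.cast_ne_zero.mpr (NeZero.ne K)
  have hM : (M : ℂ) ≠ 0 := Nat.cast_ne_zero.mpr (NeZero.ne M)
  push_cast
  field_simp

lemma dftMat_mul_gfdm_apply (g : Fin (K * M) → ℂ) (f v : Fin (K * M)) :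
    (dftMat (K * M) * gfdm K M (NeZero.pos K) (NeZero.pos M) g) f v
      = finChar (K * M) (-((f - ((M * (v.val % K) : ℕ) : Fin (K * M)))
          * ((v.val / K * K : ℕ) : Fin (K * M))))
        * (dftMat (K * M) *ᵥ g) (f - ((M * (v.val % K) : ℕ) : Fin (K * M))) := by
  rw [← dftMat_mulVec_modulate_shift]
  simp only [mul_apply, mulVec, dotProduct, gfdm_apply]

lemma pad_sub_natCast_mul_eq_zero (g1 : Fin M → ℂ) {u : Fin (K * M)} {j : ℕ} (hj : j < K)
    (hu : u.val / M ≠ j) : pad (K * M) M g1 (u - ((M * j : ℕ) : Fin (K * M))) = 0 := by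
  have hjM : M * j + M ≤ K * M := by
    rw [Nat.mul_comm K M, ← Nat.mul_succ]
    exact Nat.mul_le_mul_left M hj
  have hu' := u.isLt
  have hM := NeZero.pos M
  rw [pad, dif_neg]
  rw [Fin.val_sub, Fin.val_natCast, Nat.mod_eq_of_lt (by omega : M * j < K * M)]
  intro hlt
  by_cases hle : M * j ≤ u.val
  · rw [show K * M - M * j + u.val = (u.val - M * j) + K * M by omega, Nat.add_mod_right,
      Nat.mod_eq_of_lt (by omega)] at hlt
    exact hu (Nat.div_eq_of_lt_le (by rw [Nat.mul_comm j M]; exact hle)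
      (by rw [Nat.succ_mul, Nat.mul_comm j M]; omega))
  · rw [Nat.mod_eq_of_lt (by omega)] at hlt
    omega

lemma cycPow_dftMat_mul_circulant_gfdm_mul_piAB_apply_eq_zero {g : Fin (K * M) → ℂ}
    {g1 : Fin M → ℂ} {l : ℕ}
    (hgf : ((Real.sqrt (K * M : ℕ) : ℝ) : ℂ) • (dftMat (K * M) *ᵥ g)
      = cycPow (K * M) (l : ℤ) *ᵥ pad (K * M) M g1)
    (h : Fin (K * M) → ℂ) {u q : Fin (K * M)} (huq : u.divNat ≠ q.divNat) :
    (cycPow (K * M) (-(l : ℤ)) * dftMat (K * M)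
      * (circulant h * gfdm K M (NeZero.pos K) (NeZero.pos M) g) * (piAB K M)ᴴ) u q = 0 := by
  have hq : (piABPerm K M q).val % K = q.val / M := by
    rw [piABPerm_val, Nat.add_mul_mod_self_left,
      Nat.mod_eq_of_lt (Nat.div_lt_of_lt_mul (Nat.mul_comm K M ▸ q.isLt))]
  have hu : u.val / M ≠ (piABPerm K M q).val % K := by
    rw [hq]
    simpa [Fin.ext_iff] using huq
  rw [piAB_eq_permMatrix, conjTranspose_permMatrix, PEquiv.mul_toMatrix_toPEquiv,
    cycPow_eq_permMatrix, Matrix.mul_assoc, PEquiv.toMatrix_toPEquiv_mul, ← Matrix.mul_assoc,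
    dftMat_mul_circulant, Matrix.mul_assoc, submatrix_apply, submatrix_apply, diagonal_mul,
    dftMat_mul_gfdm_apply, dftMat_mulVec_eq_pad hgf]
  simp only [id, Equiv.subRight_apply, Equiv.Perm.inv_def, Equiv.symm_symm, Int.cast_neg,
    Int.cast_natCast, sub_neg_eq_add, add_sub_right_comm u (l : Fin (K * M)), add_sub_cancel_right]
  rw [pad_sub_natCast_mul_eq_zero g1 (Nat.mod_lt _ (NeZero.pos K)) hu]
  simp

end GFDM

section Interleaving

def kronPiABPerm (K R M : ℕ) : Equiv.Perm (Fin (R * (K * M))) :=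
  (finCongr (by ring)).permCongr
    (finProdFinEquiv.permCongr ((piABPerm K R).prodCongr (Equiv.refl (Fin M))))

lemma castM_kron_piAB_one {K R M : ℕ} (e : K * R * M = R * (K * M)) :
    castM e e (kron (piAB K R) (1 : Matrix (Fin M) (Fin M) ℂ))
      = (kronPiABPerm K R M).permMatrix ℂ := by
  rw [piAB_eq_permMatrix, kron_permMatrix_one, castM_permMatrix]
  rfl

lemma divNat_modNat_kronPiABPerm {K R M : ℕ} (e : R * (K * M) = K * (M * R))
    (i : Fin (R * (K * M))) : (kronPiABPerm K R M i).modNat.divNat = (finCongr e i).divNat := by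
  have hM : 0 < M := Nat.pos_of_ne_zero fun h => by simpa [h] using i.isLt
  have hlt : i.val / M / R < K := by
    rw [Nat.div_div_eq_div_mul]
    exact Nat.div_lt_of_lt_mul (by nlinarith [i.isLt])
  have hsmall : i.val % M + M * (i.val / M / R) < K * M := by
    have := Nat.mul_le_mul_left M (Nat.succ_le_of_lt hlt)
    rw [Nat.mul_succ, Nat.mul_comm M K] at this
    have := Nat.mod_lt i.val hM
    omega
  ext
  simp only [kronPiABPerm, Equiv.permCongr_apply, Fin.coe_divNat, Fin.coe_modNat,
    finCongr_apply, Fin.val_cast, finProdFinEquiv_apply_val, finProdFinEquiv_symm_apply,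
    Equiv.prodCongr_apply, Prod.map_apply, Equiv.refl_apply, piABPerm_val, finCongr_symm]
  rw [show i.val % M + M * (i.val / M / R + K * (i.val / M % R))
      = i.val % M + M * (i.val / M / R) + K * M * (i.val / M % R) by ring,
    Nat.add_mul_mod_self_left, Nat.mod_eq_of_lt hsmall, Nat.add_mul_div_left _ _ hM,
    Nat.div_eq_of_lt (Nat.mod_lt _ hM), zero_add, Nat.div_div_eq_div_mul]

/- `(Π_{KR} ⊗ I_M)(I_R ⊗ V)`. The paper's `U` and `P` are
`interleaveTransform K R M (Π_D^{-l} W_D)` and `interleaveTransform K T M Π_{KM}`. -/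
def interleaveTransform (K R M : ℕ) (V : Matrix (Fin (K * M)) (Fin (K * M)) ℂ) :
    Matrix (Fin (R * (K * M))) (Fin (R * (K * M))) ℂ :=
  castM (show K * R * M = R * (K * M) by ring) (show K * R * M = R * (K * M) by ring)
      (kron (piAB K R) (1 : Matrix (Fin M) (Fin M) ℂ)) *
    kron (1 : Matrix (Fin R) (Fin R) ℂ) V

lemma interleaveTransform_mem_unitaryGroup (K R M : ℕ)
    {V : Matrix (Fin (K * M)) (Fin (K * M)) ℂ} (hV : V ∈ unitaryGroup (Fin (K * M)) ℂ) :
    interleaveTransform K R M V ∈ unitaryGroup (Fin (R * (K * M))) ℂ := by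
  rw [interleaveTransform, castM_kron_piAB_one]
  exact mul_mem (permMatrix_mem_unitaryGroup _) (kron_mem_unitaryGroup (one_mem _) hV)

lemma interleaveTransform_mul_blockFlat_mul_conjTranspose {K R T M : ℕ}
    (V V' : Matrix (Fin (K * M)) (Fin (K * M)) ℂ)
    (E : Fin R → Fin T → Matrix (Fin (K * M)) (Fin (K * M)) ℂ) :
    interleaveTransform K R M V * blockFlat E * (interleaveTransform K T M V')ᴴ
      = (blockFlat fun r t => V * E r t * V'ᴴ).submatrix (kronPiABPerm K R M)
          (kronPiABPerm K T M) := by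
  rw [interleaveTransform, interleaveTransform, castM_kron_piAB_one, castM_kron_piAB_one,
    conjTranspose_mul, conjTranspose_kron, conjTranspose_one, conjTranspose_permMatrix,
    Matrix.mul_assoc _ (kron 1 V), kron_one_mul_blockFlat, Matrix.mul_assoc,
    ← Matrix.mul_assoc _ (kron 1 V'ᴴ), blockFlat_mul_kron_one, PEquiv.mul_toMatrix_toPEquiv,
    PEquiv.toMatrix_toPEquiv_mul, Equiv.Perm.inv_def, Equiv.symm_symm, submatrix_submatrix]
  rfl

end Interleaving

/-- Theorem 1, existential form: under the ICI-free hypothesis on `g`,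
with circulant channels `H_{r,t}` and `H̃` the block matrix with blocks `H_{r,t}·A`,
there exist `MR×MT` matrices `F_k` such that
`H̃ = Uᴴ · blkdiag({F_k}_{k=0}^{K-1}) · P`, where
`U = (Π_{KR} ⊗ I_M)(I_R ⊗ Π_D^{-l} W_D)` and `P = (Π_{KT} ⊗ I_M)(I_T ⊗ Π_{KM})`. -/
theorem stmt5 (K M T R : ℕ) (hK : 0 < K) (hM : 0 < M)
    (g : Fin (K * M) → ℂ) (g1 : Fin M → ℂ) (l : ℕ)
    (hgf : ((Real.sqrt (K * M) : ℝ) : ℂ) • (dftMat (K * M)).mulVec g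
      = (cycPow (K * M) (l : ℤ)).mulVec (pad (K * M) M g1))
    (h : Fin R → Fin T → Fin (K * M) → ℂ)
    (H : Fin R → Fin T → Matrix (Fin (K * M)) (Fin (K * M)) ℂ)
    (hH : ∀ r t, H r t = Matrix.circulant (h r t)) :
    ∃ F : Fin K → Matrix (Fin (M * R)) (Fin (M * T)) ℂ,
      blockFlat (fun r t => H r t * gfdm K M hK hM g)
        = (castM (show (K * R) * M = R * (K * M) by ring)
              (show (K * R) * M = R * (K * M) by ring)
              (kron (piAB K R) (1 : Matrix (Fin M) (Fin M) ℂ)) *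
            kron (1 : Matrix (Fin R) (Fin R) ℂ)
              (cycPow (K * M) (-(l : ℤ)) * dftMat (K * M)))ᴴ *
          castM (show K * (M * R) = R * (K * M) by ring)
            (show K * (M * T) = T * (K * M) by ring) (blkdiag F) *
          (castM (show (K * T) * M = T * (K * M) by ring)
              (show (K * T) * M = T * (K * M) by ring)
              (kron (piAB K T) (1 : Matrix (Fin M) (Fin M) ℂ)) *
            kron (1 : Matrix (Fin T) (Fin T) ℂ) (piAB K M)) := by
  obtain rfl : H = fun r t => circulant (h r t) := funext₂ hH
  have : NeZero K := ⟨hK.ne'⟩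
  have : NeZero M := ⟨hM.ne'⟩
  rw [← Nat.cast_mul] at hgf
  set X := blockFlat fun r t => circulant (h r t) * gfdm K M hK hM g
  have hU := interleaveTransform_mem_unitaryGroup K R M
    (cycPow_mul_dftMat_mem_unitaryGroup (K * M) (-(l : ℤ)))
  have hP := interleaveTransform_mem_unitaryGroup K T M (piAB_mem_unitaryGroup K M)
  obtain ⟨F, hF⟩ := exists_castM_blkdiag_eq (show K * (M * R) = _ by ring)
    (show K * (M * T) = _ by ring)
    (interleaveTransform K R M _ * X * (interleaveTransform K T M (piAB K M))ᴴ) fun i j hij => by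
      rw [interleaveTransform_mul_blockFlat_mul_conjTranspose, submatrix_apply]
      exact cycPow_dftMat_mul_circulant_gfdm_mul_piAB_apply_eq_zero hgf _ <| by
        rwa [divNat_modNat_kronPiABPerm, divNat_modNat_kronPiABPerm]
  exact ⟨F, hF ▸ eq_conjTranspose_mul_mul_of_mem_unitaryGroup hU hP X⟩
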